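/- (Qualitative satisfaction coincides with nonnegative robustness.) For every CaTL formula φ, every team J' ⊆ J with trajectories s_j, and every time t ∈ ℕ: (s_{J'}, t) ⊨ φ if and only if ρ(s_{J'}, t, φ) ≥ 0. -/

import Mathlib

open scoped Classical

/-- A CaTL task `T = (d, π, cp_T, cp)`: a duration, an atomic proposition, a nonempty
finite set of required capabilities, and a counting map. -/
structure CTask (AP Cap : Type) where
  dur : ℕ
  prop : AP
  cpT : Finset Cap
  cpT_nonempty : cpT.Nonempty
  cp : Cap → ℤ

/-- CaTL formulas: `φ ::= T | φ₁ ∧ φ₂ | φ₁ ∨ φ₂ | φ₁ U_[a,b] φ₂ | F_[a,b] φ | G_[a,b] φ`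
with `a ≤ b`. -/
inductive CaTL (AP Cap : Type) : Type where
  | task (T : CTask AP Cap)
  | and (φ₁ φ₂ : CaTL AP Cap)
  | or (φ₁ φ₂ : CaTL AP Cap)
  | untl (a b : ℕ) (hab : a ≤ b) (φ₁ φ₂ : CaTL AP Cap)
  | ev (a b : ℕ) (hab : a ≤ b) (φ : CaTL AP Cap)
  | alw (a b : ℕ) (hab : a ≤ b) (φ : CaTL AP Cap)

variable {Q AP Cap J : Type}

/-- `n_{q,c}^{J'}(t)`: the number of agents `j ∈ J'` with `s j t = some q` and `c ∈ Cap_j`. -/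
noncomputable def nAgents (caps : J → Finset Cap) (s : J → ℕ → Option Q)
    (J' : Finset J) (q : Q) (c : Cap) (t : ℕ) : ℕ :=
  (J'.filter (fun j => s j t = some q ∧ c ∈ caps j)).card

/-- Qualitative CaTL semantics: `(s_{J'}, t) ⊨ φ`. -/
def sat (L : Q → Set AP) (caps : J → Finset Cap) (s : J → ℕ → Option Q)
    (J' : Finset J) : CaTL AP Cap → ℕ → Prop
  | .task T, t => ∀ τ, t ≤ τ → τ < t + T.dur → ∀ q, T.prop ∈ L q → ∀ c ∈ T.cpT,
      (T.cp c : ℤ) ≤ (nAgents caps s J' q c τ : ℤ)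
  | .and φ₁ φ₂, t => sat L caps s J' φ₁ t ∧ sat L caps s J' φ₂ t
  | .or φ₁ φ₂, t => sat L caps s J' φ₁ t ∨ sat L caps s J' φ₂ t
  | .untl a b _ φ₁ φ₂, t => ∃ t', t + a ≤ t' ∧ t' ≤ t + b ∧ sat L caps s J' φ₂ t' ∧
      ∀ τ, t ≤ τ → τ ≤ t' → sat L caps s J' φ₁ τ
  | .ev a b _ φ, t => ∃ τ, t + a ≤ τ ∧ τ ≤ t + b ∧ sat L caps s J' φ τ
  | .alw a b _ φ, t => ∀ τ, t + a ≤ τ → τ ≤ t + b → sat L caps s J' φ τ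

/-- Quantitative CaTL semantics (availability robustness) `ρ(s_{J'}, t, φ) ∈ EReal`.
The infimum over an empty index set is `+∞` and the supremum is `-∞`. -/
noncomputable def rob (L : Q → Set AP) (caps : J → Finset Cap) (s : J → ℕ → Option Q)
    (J' : Finset J) : CaTL AP Cap → ℕ → EReal
  | .task T, t => ⨅ c ∈ T.cpT, ⨅ τ ∈ Finset.Ico t (t + T.dur), ⨅ q ∈ {q : Q | T.prop ∈ L q},
      ((((nAgents caps s J' q c τ : ℤ) - T.cp c : ℤ) : ℝ) : EReal)
  | .and φ₁ φ₂, t => min (rob L caps s J' φ₁ t) (rob L caps s J' φ₂ t)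
  | .or φ₁ φ₂, t => max (rob L caps s J' φ₁ t) (rob L caps s J' φ₂ t)
  | .untl a b _ φ₁ φ₂, t => ⨆ t' ∈ Finset.Icc (t + a) (t + b),
      min (rob L caps s J' φ₂ t') (⨅ τ ∈ Finset.Icc t t', rob L caps s J' φ₁ τ)
  | .ev a b _ φ, t => ⨆ τ ∈ Finset.Icc (t + a) (t + b), rob L caps s J' φ τ
  | .alw a b _ φ, t => ⨅ τ ∈ Finset.Icc (t + a) (t + b), rob L caps s J' φ τ

/-
Robustness is assembled from `min`, `max` and infima and suprema over finite index sets, and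
`0 ≤ ·` turns these into `∧`, `∨`, `∀` and `∃`; for a finite supremum this is because `⊥ < 0`,
which also covers an empty index set. At a task, `0 ≤ n - cp c` is `cp c ≤ n`.
-/

theorem Finset.le_biSup_iff {ι α : Type*} [CompleteLinearOrder α] {a : α} (ha : ⊥ < a)
    (S : Finset ι) (f : ι → α) : a ≤ ⨆ i ∈ S, f i ↔ ∃ i ∈ S, a ≤ f i := by
  rw [← Finset.sup_eq_iSup]
  exact Finset.le_sup_iff ha

section

variable (L : Q → Set AP) (caps : J → Finset Cap)
  (s : J → ℕ → Option Q) (J' : Finset J)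

theorem sat_task_iff_rob_nonneg (T : CTask AP Cap) (t : ℕ) :
    sat L caps s J' (.task T) t ↔ 0 ≤ rob L caps s J' (.task T) t := by
  simp only [sat, rob, le_iInf_iff, Finset.mem_Ico, Set.mem_ofPred_eq, EReal.coe_nonneg,
    Int.cast_nonneg_iff, sub_nonneg]
  exact ⟨fun h c hc τ hτ q hq => h τ hτ.1 hτ.2 q hq c hc,
    fun h τ h₁ h₂ q hq c hc => h c hc τ ⟨h₁, h₂⟩ q hq⟩

theorem rob_untl_nonneg_iff (a b : ℕ) (hab : a ≤ b) (φ₁ φ₂ : CaTL AP Cap) (t : ℕ) :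
    0 ≤ rob L caps s J' (.untl a b hab φ₁ φ₂) t ↔
      ∃ t' ∈ Finset.Icc (t + a) (t + b), 0 ≤ rob L caps s J' φ₂ t' ∧
        ∀ τ ∈ Finset.Icc t t', 0 ≤ rob L caps s J' φ₁ τ := by
  simp only [rob, Finset.le_biSup_iff EReal.bot_lt_zero, le_min_iff, le_iInf_iff]

theorem rob_ev_nonneg_iff (a b : ℕ) (hab : a ≤ b) (φ : CaTL AP Cap) (t : ℕ) :
    0 ≤ rob L caps s J' (.ev a b hab φ) t ↔
      ∃ τ ∈ Finset.Icc (t + a) (t + b), 0 ≤ rob L caps s J' φ τ :=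
  Finset.le_biSup_iff EReal.bot_lt_zero _ _

end

theorem sat_iff_robustness_nonneg_general
    (L : Q → Set AP) (caps : J → Finset Cap) (s : J → ℕ → Option Q)
    (φ : CaTL AP Cap) (J' : Finset J) (t : ℕ) :
    sat L caps s J' φ t ↔ 0 ≤ rob L caps s J' φ t := by
  induction φ generalizing t with
  | task T => exact sat_task_iff_rob_nonneg L caps s J' T t
  | and φ₁ φ₂ ih₁ ih₂ => simp only [sat, rob, le_min_iff, ih₁, ih₂]
  | or φ₁ φ₂ ih₁ ih₂ => simp only [sat, rob, le_max_iff, ih₁, ih₂]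
  | untl a b hab φ₁ φ₂ ih₁ ih₂ =>
    simp only [rob_untl_nonneg_iff, sat, Finset.mem_Icc, ih₁, ih₂, and_assoc, and_imp]
  | ev a b hab φ ih => simp only [rob_ev_nonneg_iff, sat, Finset.mem_Icc, ih, and_assoc]
  | alw a b hab φ ih => simp only [sat, rob, le_iInf_iff, Finset.mem_Icc, ih, and_imp]

/-- qualitative satisfaction coincides with nonnegative robustness.  For
every CaTL formula, team and time, `(s_{J'}, t) ⊨ φ` iff `ρ(s_{J'}, t, φ) ≥ 0`. -/
theorem sat_iff_robustness_nonneg [Fintype Q] [Fintype Cap] [Fintype J]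
    (L : Q → Set AP) (caps : J → Finset Cap) (s : J → ℕ → Option Q)
    (φ : CaTL AP Cap) (J' : Finset J) (t : ℕ) :
    sat L caps s J' φ t ↔ 0 ≤ rob L caps s J' φ t :=
  sat_iff_robustness_nonneg_general L caps s φ J' t
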